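/- arXiv:0710.3194 — 3 statements merged into one kernel-verified Lean document; each statement's English description precedes it below -/
import Mathlib

section
/- Let n ≥ 3 and let λ₁, …, λₙ be real numbers with Σᵢ λᵢ = 0 and Σᵢ λᵢ² = 1. Then (Σᵢ λᵢ³)² ≤ (n-2)²/(n(n-1)). -/
/-!
Cauchy–Schwarz applied to the other `n - 1` entries gives `n λᵢ² ≤ n - 1`; summed over `i` this
forces `n ≥ 2`, and it puts every entry in `[-(n-1)α, (n-1)α]` with `α = 1/√(n(n-1))`.
Summing `(λᵢ + α)² (λᵢ - (n-1)α) ≤ 0` over `i` and using the two constraints yields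
`∑ λᵢ³ ≤ (n-2)α`; the same bound for `-λ` gives the other side.
Equality holds at `λ = α (n-1, -1, …, -1)`.
-/

open Finset

section PowerSums

variable {ι : Type*} [Fintype ι] {x : ι → ℝ}

theorem card_mul_sq_le_of_sum_eq_zero (hx : ∑ i, x i = 0) (i : ι) :
    (Fintype.card ι : ℝ) * x i ^ 2 ≤ (Fintype.card ι - 1) * ∑ j, x j ^ 2 := by
  classical
  have hi := mem_univ i
  have hrest : ∑ j ∈ univ.erase i, x j = -x i := by
    rw [← add_sum_erase _ _ hi] at hx
    linarith
  have hcs := sq_sum_le_card_mul_sum_sq (s := univ.erase i) (f := x)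
  rw [hrest, cast_card_erase_of_mem hi, card_univ] at hcs
  rw [← add_sum_erase _ _ hi]
  linarith

theorem two_le_card_of_sum_eq_zero_of_sum_sq_eq_one (hx₁ : ∑ i, x i = 0)
    (hx₂ : ∑ i, x i ^ 2 = 1) : (2 : ℝ) ≤ Fintype.card ι := by
  have hsum := sum_le_sum fun i (_ : i ∈ univ) => card_mul_sq_le_of_sum_eq_zero hx₁ i
  rw [← mul_sum, hx₂, sum_const, card_univ, nsmul_eq_mul] at hsum
  have hpos : (0 : ℝ) < Fintype.card ι := by
    exact_mod_cast card_pos.mpr (nonempty_of_sum_ne_zero (hx₂.trans_ne one_ne_zero))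
  nlinarith

theorem sum_pow_three_le (hx₁ : ∑ i, x i = 0) (hx₂ : ∑ i, x i ^ 2 = 1) {α : ℝ} (hα : 0 ≤ α)
    (hcα : (Fintype.card ι : ℝ) * (Fintype.card ι - 1) * α ^ 2 = 1) :
    ∑ i, x i ^ 3 ≤ (Fintype.card ι - 2) * α := by
  set c : ℝ := (Fintype.card ι : ℝ)
  have hc : 2 ≤ c := two_le_card_of_sum_eq_zero_of_sum_sq_eq_one hx₁ hx₂
  have hle : ∀ i, x i ≤ (c - 1) * α := fun i => by
    have hsq := card_mul_sq_le_of_sum_eq_zero hx₁ i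
    rw [hx₂] at hsq
    refine le_of_sq_le_sq ?_ (by nlinarith)
    nlinarith
  have hcubic : ∀ i, (x i + α) ^ 2 * (x i - (c - 1) * α) ≤ 0 := fun i =>
    mul_nonpos_of_nonneg_of_nonpos (sq_nonneg _) (sub_nonpos.2 (hle i))
  have hexpand : ∑ i, (x i + α) ^ 2 * (x i - (c - 1) * α) = ∑ i, x i ^ 3 - (c - 2) * α := by
    have hterm : ∀ i, (x i + α) ^ 2 * (x i - (c - 1) * α) =
        x i ^ 3 + (3 - c) * α * x i ^ 2 + (3 - 2 * c) * α ^ 2 * x i - (c - 1) * α ^ 3 :=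
      fun i => by ring
    simp only [hterm, sum_sub_distrib, sum_add_distrib, ← mul_sum, hx₁, hx₂, sum_const,
      card_univ, nsmul_eq_mul]
    linear_combination (-α) * hcα
  linarith [sum_nonpos fun i (_ : i ∈ univ) => hcubic i]

theorem sq_sum_pow_three_le (hx₁ : ∑ i, x i = 0) (hx₂ : ∑ i, x i ^ 2 = 1) :
    (∑ i, x i ^ 3) ^ 2 ≤
      ((Fintype.card ι : ℝ) - 2) ^ 2 / ((Fintype.card ι : ℝ) * (Fintype.card ι - 1)) := by
  set c : ℝ := (Fintype.card ι : ℝ)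
  have hc : 2 ≤ c := two_le_card_of_sum_eq_zero_of_sum_sq_eq_one hx₁ hx₂
  set α := (√(c * (c - 1)))⁻¹
  have hα2 : α ^ 2 = (c * (c - 1))⁻¹ := by
    rw [inv_pow, Real.sq_sqrt (by nlinarith)]
  have hcα : c * (c - 1) * α ^ 2 = 1 := by
    rw [hα2, mul_inv_cancel₀ (by nlinarith)]
  have hupper := sum_pow_three_le hx₁ hx₂ (by positivity) hcα
  have hlower := sum_pow_three_le (x := -x) (by simp [hx₁]) (by simp [hx₂]) (by positivity) hcα
  simp only [Pi.neg_apply, Odd.neg_pow (by decide : Odd 3), sum_neg_distrib] at hlower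
  calc (∑ i, x i ^ 3) ^ 2 ≤ ((c - 2) * α) ^ 2 := sq_le_sq' (by linarith) hupper
    _ = (c - 2) ^ 2 / (c * (c - 1)) := by rw [mul_pow, hα2, div_eq_mul_inv]

end PowerSums

theorem cubic_power_sum_bound_general (n : ℕ) (lam : Fin n → ℝ)
    (h1 : ∑ i, lam i = 0) (h2 : ∑ i, (lam i) ^ 2 = 1) :
    (∑ i, (lam i) ^ 3) ^ 2 ≤ ((n : ℝ) - 2) ^ 2 / ((n : ℝ) * ((n : ℝ) - 1)) := by
  simpa using sq_sum_pow_three_le h1 h2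

theorem cubic_power_sum_bound (n : ℕ) (hn : 3 ≤ n) (lam : Fin n → ℝ)
    (h1 : ∑ i, lam i = 0) (h2 : ∑ i, (lam i) ^ 2 = 1) :
    (∑ i, (lam i) ^ 3) ^ 2 ≤ ((n : ℝ) - 2) ^ 2 / ((n : ℝ) * ((n : ℝ) - 1)) :=
  cubic_power_sum_bound_general n lam h1 h2
end

section
/- Let n ≥ 3, let λ₁, …, λₙ be real numbers with Σᵢ λᵢ = 0, and let S be any real number. Then f(S, λ) := (1/(n(n-1))) S² (Σᵢ λᵢ²) + (2/(n-2)) S (Σᵢ λᵢ³) + (Σᵢ λᵢ²)² ≥ 0. -/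
/-!
Read `f(S, λ)` as a quadratic polynomial in `S`. Its leading and constant coefficients are
nonnegative, and its discriminant is nonpositive precisely by Okumura's inequality
`(∑ λᵢ³)² ≤ (n-2)² / (n(n-1)) · (∑ λᵢ²)³` for traceless `λ`. Okumura's inequality itself comes
from the pointwise bound `λᵢ ≥ -(n-1)a`, where `n(n-1)a² = ∑ λᵢ²`, which makes
`∑ (λᵢ + (n-1)a)(λᵢ - a)² = ∑ λᵢ³ + (n-2)a ∑ λᵢ²` a sum of nonnegative terms.
-/

open Finset

theorem quadratic_nonneg_of_discrim_nonpos {K : Type*} [Field K] [LinearOrder K]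
    [IsStrictOrderedRing K] {a b c : K} (ha : 0 ≤ a) (hc : 0 ≤ c) (hd : discrim a b c ≤ 0)
    (x : K) : 0 ≤ a * (x * x) + b * x + c := by
  rw [discrim] at hd
  rcases ha.eq_or_lt with rfl | ha
  · obtain rfl : b = 0 := pow_eq_zero_iff two_ne_zero |>.mp (by nlinarith [sq_nonneg b])
    simpa using hc
  · have hsq : 4 * a * (a * (x * x) + b * x + c) = (2 * a * x + b) ^ 2 - (b ^ 2 - 4 * a * c) := by
      ring
    nlinarith [sq_nonneg (2 * a * x + b)]

section Okumura

variable {n : ℕ} (lam : Fin n → ℝ)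

theorem card_mul_sq_le_of_sum_eq_zero_s2 (h : ∑ i, lam i = 0) (i : Fin n) :
    (n : ℝ) * lam i ^ 2 ≤ ((n : ℝ) - 1) * ∑ j, lam j ^ 2 := by
  have hcs := sq_sum_le_card_mul_sum_sq (s := univ.erase i) (f := lam)
  have hsum : ∑ j ∈ univ.erase i, lam j = -lam i := by
    linarith [add_sum_erase univ lam (mem_univ i)]
  have hsq : ∑ j ∈ univ.erase i, lam j ^ 2 = ∑ j, lam j ^ 2 - lam i ^ 2 := by
    linarith [add_sum_erase univ (fun j => lam j ^ 2) (mem_univ i)]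
  have hcard : ((univ.erase i).card : ℝ) = (n : ℝ) - 1 := by
    rw [card_erase_of_mem (mem_univ i), card_univ, Fintype.card_fin,
      Nat.cast_sub (Nat.one_le_iff_ne_zero.mpr i.pos.ne'), Nat.cast_one]
  rw [hsum, hsq, hcard] at hcs
  linarith

theorem neg_le_of_sum_eq_zero (h : ∑ i, lam i = 0) {a : ℝ} (ha : 0 ≤ a)
    (haQ : (n : ℝ) * ((n : ℝ) - 1) * a ^ 2 = ∑ j, lam j ^ 2) (i : Fin n) :
    -(((n : ℝ) - 1) * a) ≤ lam i := by
  have hn : (1 : ℝ) ≤ n := by exact_mod_cast i.pos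
  have hsq : lam i ^ 2 ≤ (((n : ℝ) - 1) * a) ^ 2 := by
    have := card_mul_sq_le_of_sum_eq_zero_s2 lam h i
    rw [← haQ] at this
    nlinarith [sq_nonneg (((n : ℝ) - 1) * a), sq_nonneg (lam i)]
  exact (abs_le_of_sq_le_sq' hsq (by positivity)).1

theorem neg_le_sum_cube_of_sum_eq_zero (h : ∑ i, lam i = 0) {a : ℝ} (ha : 0 ≤ a)
    (haQ : (n : ℝ) * ((n : ℝ) - 1) * a ^ 2 = ∑ j, lam j ^ 2) :
    -(((n : ℝ) - 2) * a * ∑ j, lam j ^ 2) ≤ ∑ j, lam j ^ 3 := by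
  have hterm : ∀ i ∈ univ, 0 ≤ (lam i + ((n : ℝ) - 1) * a) * (lam i - a) ^ 2 := fun i _ =>
    mul_nonneg (by linarith [neg_le_of_sum_eq_zero lam h ha haQ i]) (sq_nonneg _)
  have hexpand : ∑ i, (lam i + ((n : ℝ) - 1) * a) * (lam i - a) ^ 2
      = ∑ i, lam i ^ 3 + ((n : ℝ) - 3) * a * ∑ i, lam i ^ 2
        + (3 - 2 * (n : ℝ)) * a ^ 2 * ∑ i, lam i + (n : ℝ) * ((n : ℝ) - 1) * a ^ 3 := by
    rw [sum_congr rfl fun i _ => (by ring : (lam i + ((n : ℝ) - 1) * a) * (lam i - a) ^ 2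
      = lam i ^ 3 + ((n : ℝ) - 3) * a * lam i ^ 2 + (3 - 2 * (n : ℝ)) * a ^ 2 * lam i
        + ((n : ℝ) - 1) * a ^ 3)]
    simp only [sum_add_distrib, ← mul_sum, sum_const, card_univ, Fintype.card_fin, nsmul_eq_mul]
    ring
  have hcube : (n : ℝ) * ((n : ℝ) - 1) * a ^ 3 = a * ∑ j, lam j ^ 2 := by
    rw [← haQ]; ring
  have := sum_nonneg hterm
  rw [hexpand, h, hcube] at this
  linarith

/-- Okumura's inequality. -/
theorem sq_sum_cube_le_of_sum_eq_zero (hn : 2 ≤ n) (h : ∑ i, lam i = 0) :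
    (∑ i, lam i ^ 3) ^ 2 * ((n : ℝ) * ((n : ℝ) - 1))
      ≤ ((n : ℝ) - 2) ^ 2 * (∑ i, lam i ^ 2) ^ 3 := by
  set Q := ∑ i, lam i ^ 2
  have hP : 0 < (n : ℝ) * ((n : ℝ) - 1) := by
    have : (2 : ℝ) ≤ n := by exact_mod_cast hn
    nlinarith
  set a := √(Q / ((n : ℝ) * ((n : ℝ) - 1)))
  have ha : 0 ≤ a := Real.sqrt_nonneg _
  have haQ : (n : ℝ) * ((n : ℝ) - 1) * a ^ 2 = Q := by
    rw [Real.sq_sqrt (by positivity), mul_div_cancel₀ _ hP.ne']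
  have hlow := neg_le_sum_cube_of_sum_eq_zero lam h ha haQ
  have hhigh := neg_le_sum_cube_of_sum_eq_zero (fun i => -lam i) (by simp [h]) ha
    (by simpa only [neg_sq] using haQ)
  simp only [neg_sq, Odd.neg_pow (by decide : Odd 3), sum_neg_distrib] at hhigh
  have habs : (∑ i, lam i ^ 3) ^ 2 ≤ (((n : ℝ) - 2) * a * Q) ^ 2 :=
    sq_le_sq' hlow (by linarith)
  calc (∑ i, lam i ^ 3) ^ 2 * ((n : ℝ) * ((n : ℝ) - 1))
      ≤ (((n : ℝ) - 2) * a * Q) ^ 2 * ((n : ℝ) * ((n : ℝ) - 1)) := by gcongr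
    _ = ((n : ℝ) - 2) ^ 2 * Q ^ 3 := by rw [← haQ]; ring

end Okumura

theorem soliton_quadratic_nonneg (n : ℕ) (hn : 3 ≤ n) (S : ℝ) (lam : Fin n → ℝ)
    (h1 : ∑ i, lam i = 0) :
    0 ≤ (1 / ((n : ℝ) * ((n : ℝ) - 1))) * S ^ 2 * (∑ i, (lam i) ^ 2)
        + (2 / ((n : ℝ) - 2)) * S * (∑ i, (lam i) ^ 3)
        + (∑ i, (lam i) ^ 2) ^ 2 := by
  have hn3 : (3 : ℝ) ≤ n := by exact_mod_cast hn
  have hok := sq_sum_cube_le_of_sum_eq_zero lam (by omega) h1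
  set Q := ∑ i, lam i ^ 2
  set C := ∑ i, lam i ^ 3
  have hdisc : discrim (Q / ((n : ℝ) * ((n : ℝ) - 1))) (2 / ((n : ℝ) - 2) * C) (Q ^ 2)
      = 4 * (C ^ 2 * ((n : ℝ) * ((n : ℝ) - 1)) - ((n : ℝ) - 2) ^ 2 * Q ^ 3)
        / (((n : ℝ) - 2) ^ 2 * ((n : ℝ) * ((n : ℝ) - 1))) := by
    have : (n : ℝ) - 1 ≠ 0 := by linarith
    have : (n : ℝ) - 2 ≠ 0 := by linarith
    rw [discrim]
    field_simp
    ring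
  have hP : 0 < (n : ℝ) * ((n : ℝ) - 1) := by nlinarith
  have hQ : 0 ≤ Q := sum_nonneg fun i _ => sq_nonneg _
  have := quadratic_nonneg_of_discrim_nonpos (div_nonneg hQ hP.le) (sq_nonneg Q)
    (hdisc ▸ div_nonpos_of_nonpos_of_nonneg (by linarith) (by positivity)) S
  linear_combination this
end

section
/- Let n ≥ 3, S > 0, and λ₁, …, λₙ real with Σᵢ λᵢ = 0. If (1/(n(n-1))) S² Σλᵢ² + (2/(n-2)) S Σλᵢ³ + (Σλᵢ²)² = 0, then either λᵢ = 0 for all i, or there is a > 0 such that (up to permutation) λᵢ = a/√(n(n-1)) for i ≤ n-1, λₙ = -a√((n-1)/n), and S = √(n(n-1))·a. -/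
/-!
Put `t = ∑ λᵢ²` and `d = √(t / (n (n - 1)))`. Cauchy–Schwarz on the other `n - 1` entries gives
`λᵢ ≥ -(n - 1) d`, so `∑ λᵢ³ + (n - 2) d t = ∑ (λᵢ - d)² (λᵢ + (n - 1) d) ≥ 0` (Okumura's
inequality), with equality only if every `λᵢ` is `d` or `-(n - 1) d`. The hypothesis rewrites as
`d² (S - n (n - 1) d)² + 2S/(n - 2) · (∑ λᵢ³ + (n - 2) d t) = 0`, a sum of two nonnegative terms,
so `S = n (n - 1) d` and Okumura's inequality is an equality; as `∑ λᵢ = 0`, exactly one entry is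
then `-(n - 1) d`.
-/

open Finset

section SumZero

variable {ι : Type*} [Fintype ι] {x : ι → ℝ}

theorem neg_le_of_sum_sq_eq (hx : ∑ i, x i = 0) {d : ℝ} (hd : 0 ≤ d)
    (ht : ∑ j, x j ^ 2 = Fintype.card ι * (Fintype.card ι - 1) * d ^ 2) (i : ι) :
    -((Fintype.card ι - 1) * d) ≤ x i := by
  set N : ℝ := (Fintype.card ι : ℝ)
  have hN : 1 ≤ N := Nat.one_le_cast.mpr (Fintype.card_pos_iff.mpr ⟨i⟩)
  have hsq : x i ^ 2 ≤ ((N - 1) * d) ^ 2 := by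
    have h := card_mul_sq_le_of_sum_eq_zero hx i
    rw [ht] at h
    nlinarith
  exact (abs_le_of_sq_le_sq' hsq (mul_nonneg (by linarith) hd)).1

theorem sum_sq_mul_eq_sum_cube_add (hx : ∑ i, x i = 0) {d : ℝ}
    (ht : ∑ j, x j ^ 2 = Fintype.card ι * (Fintype.card ι - 1) * d ^ 2) :
    ∑ i, (x i - d) ^ 2 * (x i + (Fintype.card ι - 1) * d)
      = ∑ i, x i ^ 3 + (Fintype.card ι - 2) * d * ∑ i, x i ^ 2 := by
  set N : ℝ := (Fintype.card ι : ℝ)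
  calc ∑ i, (x i - d) ^ 2 * (x i + (N - 1) * d)
      = ∑ i, (x i ^ 3 + (N - 3) * d * x i ^ 2 + (3 - 2 * N) * d ^ 2 * x i + (N - 1) * d ^ 3) :=
        sum_congr rfl fun _ _ => by ring
    _ = ∑ i, x i ^ 3 + (N - 3) * d * ∑ i, x i ^ 2 + (3 - 2 * N) * d ^ 2 * ∑ i, x i
          + N * ((N - 1) * d ^ 3) := by
        simp only [sum_add_distrib, ← mul_sum, sum_const, card_univ, nsmul_eq_mul, N]; ring
    _ = ∑ i, x i ^ 3 + (N - 2) * d * ∑ i, x i ^ 2 := by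
        rw [hx, ht]; ring

/-- Okumura's inequality, with `d = √(∑ x² / (N (N - 1)))`. -/
theorem neg_mul_sum_sq_le_sum_cube (hx : ∑ i, x i = 0) {d : ℝ} (hd : 0 ≤ d)
    (ht : ∑ j, x j ^ 2 = Fintype.card ι * (Fintype.card ι - 1) * d ^ 2) :
    -((Fintype.card ι - 2) * d * ∑ i, x i ^ 2) ≤ ∑ i, x i ^ 3 := by
  have h := sum_sq_mul_eq_sum_cube_add hx ht
  have : 0 ≤ ∑ i, (x i - d) ^ 2 * (x i + (Fintype.card ι - 1) * d) :=
    sum_nonneg fun i _ => mul_nonneg (sq_nonneg _) (by linarith [neg_le_of_sum_sq_eq hx hd ht i])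
  linarith

theorem eq_or_eq_of_sum_cube_eq (hx : ∑ i, x i = 0) {d : ℝ} (hd : 0 ≤ d)
    (ht : ∑ j, x j ^ 2 = Fintype.card ι * (Fintype.card ι - 1) * d ^ 2)
    (heq : ∑ i, x i ^ 3 = -((Fintype.card ι - 2) * d * ∑ i, x i ^ 2)) (i : ι) :
    x i = d ∨ x i = -((Fintype.card ι - 1) * d) := by
  have hzero : ∑ i, (x i - d) ^ 2 * (x i + (Fintype.card ι - 1) * d) = 0 := by
    rw [sum_sq_mul_eq_sum_cube_add hx ht, heq]; ring
  have hnonneg : ∀ j ∈ univ, 0 ≤ (x j - d) ^ 2 * (x j + (Fintype.card ι - 1) * d) :=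
    fun j _ => mul_nonneg (sq_nonneg _) (by linarith [neg_le_of_sum_sq_eq hx hd ht j])
  rcases mul_eq_zero.mp ((sum_eq_zero_iff_of_nonneg hnonneg).mp hzero i (mem_univ i)) with h | h
  · exact Or.inl (sub_eq_zero.mp (pow_eq_zero_iff two_ne_zero |>.mp h))
  · exact Or.inr (by linarith)

/-- Each entry `-(N - 1) d` contributes `-N d` to `∑ (x i - d) = -N d`. -/
theorem exists_eq_of_forall_eq_or_eq [Nonempty ι] (hx : ∑ i, x i = 0) {d : ℝ} (hd : d ≠ 0)
    (h : ∀ i, x i = d ∨ x i = -((Fintype.card ι - 1) * d)) :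
    ∃ k, x k = -((Fintype.card ι - 1) * d) ∧ ∀ j ≠ k, x j = d := by
  classical
  set N : ℝ := (Fintype.card ι : ℝ)
  have hNd : N * d ≠ 0 := mul_ne_zero (by positivity) hd
  have hpoint : ∀ i, x i - d = if x i = d then 0 else -(N * d) := fun i => by
    by_cases hid : x i = d
    · rw [if_pos hid, hid, sub_self]
    · rw [if_neg hid, (h i).resolve_left hid]; ring
  have hcount : ((univ.filter fun i => x i ≠ d).card : ℝ) * (N * d) = 1 * (N * d) := by
    have hs : ∑ i, (x i - d) = -(N * d) := by
      rw [sum_sub_distrib, hx, sum_const, card_univ, nsmul_eq_mul]; ring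
    rw [sum_congr rfl fun i _ => hpoint i, sum_ite, sum_const_zero, sum_const,
      nsmul_eq_mul] at hs
    linarith
  obtain ⟨k, hk⟩ := card_eq_one.mp (by exact_mod_cast mul_right_cancel₀ hNd hcount)
  have hmem : ∀ j, x j ≠ d ↔ j = k := fun j => by
    simpa only [mem_filter, mem_univ, true_and, mem_singleton] using Finset.ext_iff.mp hk j
  refine ⟨k, (h k).resolve_left ((hmem k).mpr rfl), fun j hj => ?_⟩
  by_contra hne
  exact hj ((hmem j).mp hne)

end SumZero

theorem Fin.exists_perm_apply_eq_ite {α : Type*} {n : ℕ} (hn : 0 < n) {x : Fin n → α} {a b : α}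
    {k : Fin n} (hk : x k = b) (hne : ∀ j ≠ k, x j = a) :
    ∃ σ : Equiv.Perm (Fin n), ∀ i : Fin n, x (σ i) = if (i : ℕ) < n - 1 then a else b := by
  set last : Fin n := ⟨n - 1, by omega⟩
  refine ⟨Equiv.swap last k, fun i => ?_⟩
  by_cases hi : (i : ℕ) < n - 1
  · have hil : i ≠ last := fun h => by simp [h, last] at hi
    rw [if_pos hi, hne]
    intro h
    exact hil ((Equiv.swap last k).injective (h.trans (Equiv.swap_apply_left last k).symm))
  · have hil : i = last := Fin.ext (by simp only [last]; omega)
    rw [if_neg hi, hil, Equiv.swap_apply_left, hk]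

theorem eq_of_quadratic_eq_zero {N S d t p : ℝ} (hN : 2 < N) (hS : 0 < S) (hd : 0 < d)
    (ht : t = N * (N - 1) * d ^ 2) (hp : -((N - 2) * d * t) ≤ p)
    (heq : 1 / (N * (N - 1)) * S ^ 2 * t + 2 / (N - 2) * S * p + t ^ 2 = 0) :
    S = N * (N - 1) * d ∧ p = -((N - 2) * d * t) := by
  have hN2 : 0 < N - 2 := by linarith
  have hN1 : N - 1 ≠ 0 := by linarith
  have hSt : 1 / (N * (N - 1)) * S ^ 2 * t = S ^ 2 * d ^ 2 := by
    rw [ht]; field_simp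
  have hsplit :
      d ^ 2 * (S - N * (N - 1) * d) ^ 2 + 2 * S / (N - 2) * (p + (N - 2) * d * t) = 0 := by
    rw [← heq, hSt, ht]; field_simp; ring
  have h1 : 0 ≤ d ^ 2 * (S - N * (N - 1) * d) ^ 2 := by positivity
  have h2 : 0 ≤ 2 * S / (N - 2) * (p + (N - 2) * d * t) :=
    mul_nonneg (by positivity) (by linarith)
  have hS' : (S - N * (N - 1) * d) ^ 2 = 0 :=
    (mul_eq_zero.mp (by linarith : d ^ 2 * (S - N * (N - 1) * d) ^ 2 = 0)).resolve_left
      (by positivity)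
  have hp' : p + (N - 2) * d * t = 0 :=
    (mul_eq_zero.mp (by linarith : 2 * S / (N - 2) * (p + (N - 2) * d * t) = 0)).resolve_left
      (by positivity)
  exact ⟨by nlinarith [pow_eq_zero_iff two_ne_zero |>.mp hS'], by linarith⟩

theorem equality_case_classification (n : ℕ) (hn : 3 ≤ n) (S : ℝ) (hS : 0 < S)
    (lam : Fin n → ℝ) (h1 : ∑ i, lam i = 0)
    (heq : (1 / ((n : ℝ) * ((n : ℝ) - 1))) * S ^ 2 * (∑ i, (lam i) ^ 2)
        + (2 / ((n : ℝ) - 2)) * S * (∑ i, (lam i) ^ 3)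
        + (∑ i, (lam i) ^ 2) ^ 2 = 0) :
    (∀ i, lam i = 0) ∨
      ∃ a : ℝ, 0 < a ∧ S = Real.sqrt ((n : ℝ) * ((n : ℝ) - 1)) * a ∧
        ∃ σ : Equiv.Perm (Fin n), ∀ i : Fin n,
          lam (σ i) = if (i : ℕ) < n - 1 then a / Real.sqrt ((n : ℝ) * ((n : ℝ) - 1))
            else -a * Real.sqrt (((n : ℝ) - 1) / (n : ℝ)) := by
  have hN : (2 : ℝ) < n := by exact_mod_cast hn
  have hN1 : (0 : ℝ) < n * (n - 1) := by nlinarith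
  have hN1' : (n : ℝ) - 1 ≠ 0 := by linarith
  set d := √((∑ i, lam i ^ 2) / (n * (n - 1)))
  have ht : ∑ i, lam i ^ 2 = Fintype.card (Fin n) * (Fintype.card (Fin n) - 1) * d ^ 2 := by
    rw [Fintype.card_fin, Real.sq_sqrt (by positivity)]
    field_simp
  rcases (show 0 ≤ d from Real.sqrt_nonneg _).eq_or_lt with hd | hd
  · left
    have ht0 : ∑ i, lam i ^ 2 = 0 := by rw [ht, ← hd]; ring
    exact fun i => pow_eq_zero_iff two_ne_zero |>.mp
      (congrFun ((Fintype.sum_eq_zero_iff_of_nonneg fun j => sq_nonneg (lam j)).mp ht0) i)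
  right
  have hp := neg_mul_sum_sq_le_sum_cube h1 hd.le ht
  obtain ⟨hSd, hp3⟩ := eq_of_quadratic_eq_zero hN hS hd (by simpa using ht) (by simpa using hp) heq
  have : Nonempty (Fin n) := ⟨⟨0, by omega⟩⟩
  obtain ⟨k, hk, hne⟩ := exists_eq_of_forall_eq_or_eq h1 hd.ne'
    (eq_or_eq_of_sum_cube_eq h1 hd.le ht (by simpa using hp3))
  simp only [Fintype.card_fin] at hk
  have hroot : √(n * (n - 1)) * √(n * (n - 1)) = n * (n - 1) := Real.mul_self_sqrt hN1.le
  have hroot' : √(n * (n - 1)) * √((n - 1) / n) = n - 1 := by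
    rw [← Real.sqrt_mul hN1.le, show (n : ℝ) * (n - 1) * ((n - 1) / n) = (n - 1) ^ 2 by
      field_simp, Real.sqrt_sq (by linarith)]
  have hpos : 0 < √(n * (n - 1)) := Real.sqrt_pos.mpr hN1
  refine ⟨√(n * (n - 1)) * d, by positivity, by rw [hSd, ← mul_assoc, hroot], ?_⟩
  refine Fin.exists_perm_apply_eq_ite (by omega) (k := k) ?_ fun j hj => ?_
  · rw [hk]; linear_combination d * hroot'
  · rw [hne j hj]; field_simp
end
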